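/- Let Q ∈ ℝ^{2×2} be symmetric positive definite with Q₁₂ < 0, and let g ∈ ℝ² satisfy −Q₂₂g₁ + Q₁₂g₂ ≤ 0 and Q₁₂g₁ − Q₁₁g₂ ≤ 0. Then exactly one of the following holds: (a) g₁ ≥ 0 and g₂ ≥ 0, or (b) g₂Q₁₂/Q₂₂ ≤ g₁ < 0, or (c) g₁Q₁₂/Q₁₁ ≤ g₂ < 0; moreover cases (b) and (c) cannot hold simultaneously. -/

import Mathlib

open Matrix

/-! Each sign-pattern inequality is one of the two hypotheses divided by a positive diagonal
entry of `Q`. The only real content is that `g₁` and `g₂` cannot both be negative: since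
`Q₁₂ < 0`, a negative `g₂` makes `Q₁₂ g₂` positive, and `Q₂₂ g₁ ≥ Q₁₂ g₂` then forces `g₁ > 0`. -/

lemma pos_of_mul_le_of_neg_of_neg {R : Type*} [Ring R] [LinearOrder R] [IsStrictOrderedRing R]
    {a b x y : R} (ha : 0 < a) (hb : b < 0) (hy : y < 0)
    (h : b * y ≤ a * x) : 0 < x :=
  pos_of_mul_pos_right ((mul_pos_of_neg_of_neg hb hy).trans_le h) ha.le

theorem stmt_10_general (Q : Matrix (Fin 2) (Fin 2) ℝ)
    (hQpd : Q.PosDef) (g : Fin 2 → ℝ)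
    (hQ12 : Q 0 1 < 0)
    (hx1 : -Q 1 1 * g 0 + Q 0 1 * g 1 ≤ 0)
    (hx2 : Q 0 1 * g 0 - Q 0 0 * g 1 ≤ 0) :
    ((0 ≤ g 0 ∧ 0 ≤ g 1) ∨
      (g 1 * Q 0 1 / Q 1 1 ≤ g 0 ∧ g 0 < 0) ∨
      (g 0 * Q 0 1 / Q 0 0 ≤ g 1 ∧ g 1 < 0)) ∧
    ¬ ((0 ≤ g 0 ∧ 0 ≤ g 1) ∧ (g 1 * Q 0 1 / Q 1 1 ≤ g 0 ∧ g 0 < 0)) ∧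
    ¬ ((0 ≤ g 0 ∧ 0 ≤ g 1) ∧ (g 0 * Q 0 1 / Q 0 0 ≤ g 1 ∧ g 1 < 0)) ∧
    ¬ ((g 1 * Q 0 1 / Q 1 1 ≤ g 0 ∧ g 0 < 0) ∧
       (g 0 * Q 0 1 / Q 0 0 ≤ g 1 ∧ g 1 < 0)) := by
  have hQ00 : 0 < Q 0 0 := hQpd.diag_pos
  have hQ11 : 0 < Q 1 1 := hQpd.diag_pos
  have hb : g 1 * Q 0 1 / Q 1 1 ≤ g 0 := (div_le_iff₀ hQ11).2 (by linarith)
  have hc : g 0 * Q 0 1 / Q 0 0 ≤ g 1 := (div_le_iff₀ hQ00).2 (by linarith)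
  have hg0 : g 1 < 0 → 0 ≤ g 0 := fun hg1 =>
    (pos_of_mul_le_of_neg_of_neg hQ11 hQ12 hg1 (by linarith)).le
  simp only [hb, hc, true_and, not_and, not_lt]
  refine ⟨?_, And.left, And.right, fun h0 => not_lt.1 fun h1 => (hg0 h1).not_gt h0⟩
  rcases lt_or_ge (g 0) 0 with h0 | h0
  · exact .inr (.inl h0)
  rcases lt_or_ge (g 1) 0 with h1 | h1
  · exact .inr (.inr h1)
  exact .inl ⟨h0, h1⟩

/-- Case analysis of Proposition 3.1, Case 1: for `Q` symmetric positive
definite with `Q₁₂ < 0` and `-Q⁻¹g` componentwise nonpositive, exactly one of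
(a) `g₁ ≥ 0 ∧ g₂ ≥ 0`, (b) `g₂Q₁₂/Q₂₂ ≤ g₁ < 0`, (c) `g₁Q₁₂/Q₁₁ ≤ g₂ < 0`
holds; in particular (b) and (c) cannot hold simultaneously. -/
theorem stmt_10 (Q : Matrix (Fin 2) (Fin 2) ℝ) (hQsymm : Q.IsSymm)
    (hQpd : Q.PosDef) (g : Fin 2 → ℝ)
    (hQ12 : Q 0 1 < 0)
    (hx1 : -Q 1 1 * g 0 + Q 0 1 * g 1 ≤ 0)
    (hx2 : Q 0 1 * g 0 - Q 0 0 * g 1 ≤ 0) :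
    ((0 ≤ g 0 ∧ 0 ≤ g 1) ∨
      (g 1 * Q 0 1 / Q 1 1 ≤ g 0 ∧ g 0 < 0) ∨
      (g 0 * Q 0 1 / Q 0 0 ≤ g 1 ∧ g 1 < 0)) ∧
    ¬ ((0 ≤ g 0 ∧ 0 ≤ g 1) ∧ (g 1 * Q 0 1 / Q 1 1 ≤ g 0 ∧ g 0 < 0)) ∧
    ¬ ((0 ≤ g 0 ∧ 0 ≤ g 1) ∧ (g 0 * Q 0 1 / Q 0 0 ≤ g 1 ∧ g 1 < 0)) ∧
    ¬ ((g 1 * Q 0 1 / Q 1 1 ≤ g 0 ∧ g 0 < 0) ∧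
       (g 0 * Q 0 1 / Q 0 0 ≤ g 1 ∧ g 1 < 0)) :=
  stmt_10_general Q hQpd g hQ12 hx1 hx2
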